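/- In dimension d ≥ 3, for any ε > 0 there exists a bounded open set Ω ⊂ ℝ^d with |Ω| = M (a disjoint union of finitely many balls) such that λ(Ω) = inf{∫_Ω|∇u|² + (1/(km))(∫_{∂Ω}|u|dH^{d-1})² : u ∈ H¹(Ω), ∫_Ω u² = 1} < ε. -/

import Mathlib

/-!
Take `N` balls of radius `r`, pairwise at distance at least `3r`, of total volume `M`, and
`u = a φ` with `φ` a bump function equal to `1` on one ball and to `0` on the others. The gradient
of `u` vanishes on the domain, so with `a² |B_r| = 1` its quotient is
`(a H^(d-1)(∂B_r))² / (k m) = σ² r^(2(d-1)) / (k m ω r^d) = C r^(d-2)`, where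
`σ = H^(d-1)(S^(d-1))` and `ω = |B_1|`. For `d ≥ 3` this tends to `0` with `r`, and `r` is small
once `N` is large. The one analytic input is `σ < ∞`: the sphere is covered by the images of two
balls of radius `2` under inverse stereographic projections, which are smooth, hence Lipschitz
on these balls.
-/

open MeasureTheory Metric Set

def memH1 {d : ℕ} (Ω : Set (EuclideanSpace ℝ (Fin d))) (u : EuclideanSpace ℝ (Fin d) → ℝ) :
    Prop :=
  ContinuousOn u (closure Ω) ∧ DifferentiableOn ℝ u Ω ∧
  IntegrableOn (fun x => ‖fderiv ℝ u x‖ ^ 2) Ω ∧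
  IntegrableOn (fun x => (u x) ^ 2) Ω ∧
  IntegrableOn (fun x => |u x|) (frontier Ω) (μH[(d : ℝ) - 1])

open scoped InnerProductSpace Pointwise Topology

section Sphere

variable {E : Type*} [NormedAddCommGroup E] [InnerProductSpace ℝ E]

lemma norm_stereoToFun_le_two {v x : E} (hx : ‖x‖ = 1) (hvx : ⟪v, x⟫_ℝ ≤ 0) :
    ‖stereoToFun v x‖ ≤ 2 := by
  have hpos : 0 < 1 - ⟪v, x⟫_ℝ := by linarith
  have hproj := (ℝ ∙ v)ᗮ.norm_orthogonalProjectionOnto_apply_le x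
  rw [stereoToFun_apply, norm_smul, innerSL_apply_apply, Real.norm_eq_abs,
    abs_of_pos (div_pos two_pos hpos), div_mul_eq_mul_div, div_le_iff₀ hpos]
  nlinarith

lemma sphere_subset_stereoInvFunAux_image {v : E} (hv : ‖v‖ = 1) :
    sphere (0 : E) 1 ⊆
      (stereoInvFunAux v ∘ (↑)) '' closedBall (0 : (ℝ ∙ v)ᗮ) 2 ∪
        (stereoInvFunAux (-v) ∘ (↑)) '' closedBall (0 : (ℝ ∙ (-v))ᗮ) 2 := by
  have key {w : E} (hw : ‖w‖ = 1) (x : sphere (0 : E) 1) (hwx : ⟪w, x⟫_ℝ ≤ 0) :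
      (x : E) ∈ (stereoInvFunAux w ∘ (↑)) '' closedBall (0 : (ℝ ∙ w)ᗮ) 2 := by
    have hxw : (x : E) ≠ w := by
      rintro h
      rw [h, real_inner_self_eq_norm_sq, hw] at hwx
      norm_num at hwx
    refine ⟨stereoToFun w x, ?_, congrArg Subtype.val (stereo_left_inv hw hxw)⟩
    rw [mem_closedBall_zero_iff]
    exact norm_stereoToFun_le_two (by simp) hwx
  intro x hx
  rcases le_total ⟪v, x⟫_ℝ 0 with h | h
  · exact Or.inl (key hv ⟨x, hx⟩ h)
  · exact Or.inr (key (by rwa [norm_neg]) ⟨x, hx⟩ (by rwa [inner_neg_left, neg_nonpos]))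

variable [FiniteDimensional ℝ E] [MeasurableSpace E] [BorelSpace E]

lemma hausdorffMeasure_stereoInvFunAux_image_lt_top {n : ℕ} (hE : Module.finrank ℝ E = n + 1)
    {v : E} (hv : v ≠ 0) (R : ℝ) :
    μH[n] ((stereoInvFunAux v ∘ (↑)) '' closedBall (0 : (ℝ ∙ v)ᗮ) R) < ⊤ := by
  have : Fact (Module.finrank ℝ E = n + 1) := ⟨hE⟩
  obtain ⟨K, hK⟩ := ((contDiff_stereoInvFunAux (m := 1)).comp
    (ℝ ∙ v)ᗮ.subtypeL.contDiff).contDiffOn.exists_lipschitzOnWith one_ne_zero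
    (convex_closedBall 0 R) (isCompact_closedBall 0 R)
  calc μH[n] ((stereoInvFunAux v ∘ (↑)) '' closedBall (0 : (ℝ ∙ v)ᗮ) R)
      ≤ K ^ (n : ℝ) * μH[n] (closedBall (0 : (ℝ ∙ v)ᗮ) R) :=
        hK.hausdorffMeasure_image_le n.cast_nonneg
    _ < ⊤ := by
      rw [← Submodule.finrank_orthogonal_span_singleton (𝕜 := ℝ) (n := n) hv]
      exact ENNReal.mul_lt_top (by simp) (isCompact_closedBall 0 R).measure_lt_top

theorem hausdorffMeasure_sphere_lt_top {n : ℕ} (hE : Module.finrank ℝ E = n + 1) :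
    μH[n] (sphere (0 : E) 1) < ⊤ := by
  have : Nontrivial E := Module.nontrivial_of_finrank_pos (R := ℝ) (by omega)
  obtain ⟨v, hv⟩ := exists_norm_eq E zero_le_one
  have hv0 : v ≠ 0 := norm_ne_zero_iff.1 (by rw [hv]; exact one_ne_zero)
  calc μH[n] (sphere (0 : E) 1) ≤ _ := measure_mono (sphere_subset_stereoInvFunAux_image hv)
    _ ≤ _ := measure_union_le _ _
    _ < ⊤ := ENNReal.add_lt_top.2 ⟨hausdorffMeasure_stereoInvFunAux_image_lt_top hE hv0 2,
      hausdorffMeasure_stereoInvFunAux_image_lt_top hE (neg_ne_zero.2 hv0) 2⟩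

end Sphere

lemma hausdorffMeasure_sphere {E : Type*} [NormedAddCommGroup E] [NormedSpace ℝ E] [Nontrivial E]
    [MeasurableSpace E] [BorelSpace E] {s : ℝ} (hs : 0 ≤ s) (c : E) {r : ℝ} (hr : 0 < r) :
    μH[s] (sphere c r) = ENNReal.ofReal (r ^ s) * μH[s] (sphere (0 : E) 1) := by
  have : sphere c r = c +ᵥ r • sphere (0 : E) 1 := by
    rw [smul_sphere r 0 zero_le_one, vadd_sphere, smul_zero, vadd_eq_add, add_zero,
      Real.norm_of_nonneg hr.le, mul_one]
  rw [this, hausdorffMeasure_vadd c (Or.inl hs), Measure.hausdorffMeasure_smul₀ hs hr.ne',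
    ENNReal.smul_def, smul_eq_mul, ENNReal.coe_rpow_of_nonneg _ hs,
    ← ENNReal.ofReal_rpow_of_nonneg hr.le hs, ← enorm_eq_nnnorm, Real.enorm_of_nonneg hr.le]

lemma EuclideanSpace.hausdorffMeasure_sphere_ne_top {d : ℕ} (hd : d ≠ 0)
    (c : EuclideanSpace ℝ (Fin d)) {r : ℝ} (hr : 0 < r) : μH[(d : ℝ) - 1] (sphere c r) ≠ ⊤ := by
  have : NeZero d := ⟨hd⟩
  obtain ⟨n, rfl⟩ := Nat.exists_eq_succ_of_ne_zero hd
  have hs : ((n + 1 : ℕ) : ℝ) - 1 = n := by push_cast; ring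
  rw [hs, hausdorffMeasure_sphere n.cast_nonneg c hr]
  exact ENNReal.mul_ne_top ENNReal.ofReal_ne_top
    (hausdorffMeasure_sphere_lt_top (by rw [finrank_euclideanSpace_fin])).ne

lemma hausdorffMeasure_sphere_sq_div_volume_ball {d : ℕ} (hd : 2 ≤ d)
    (c : EuclideanSpace ℝ (Fin d)) {r : ℝ} (hr : 0 < r) :
    μH[(d : ℝ) - 1].real (sphere c r) ^ 2 / volume.real (ball c r) =
      r ^ (d - 2) * (μH[(d : ℝ) - 1].real (sphere (0 : EuclideanSpace ℝ (Fin d)) 1) ^ 2 /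
        volume.real (ball (0 : EuclideanSpace ℝ (Fin d)) 1)) := by
  have : NeZero d := ⟨by omega⟩
  obtain ⟨n, rfl⟩ := Nat.exists_eq_add_of_le' hd
  have hs : ((n + 2 : ℕ) : ℝ) - 1 = (n + 1 : ℕ) := by push_cast; ring
  simp only [measureReal_def]
  rw [hausdorffMeasure_sphere (by rw [hs]; positivity) c hr, Measure.addHaar_ball _ _ hr.le,
    finrank_euclideanSpace_fin, ENNReal.toReal_mul, ENNReal.toReal_mul,
    ENNReal.toReal_ofReal (by positivity), ENNReal.toReal_ofReal (by positivity), hs,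
    Real.rpow_natCast, Nat.add_sub_cancel]
  field_simp
  ring

lemma exists_nat_mul_pow_eq_with_small_base {M r₀ : ℝ} (hM : 0 < M) (hr₀ : 0 < r₀) {d : ℕ}
    (hd : d ≠ 0) : ∃ N : ℕ, 0 < N ∧ ∃ r, 0 < r ∧ r < r₀ ∧ N * r ^ d = M := by
  obtain ⟨N, hN⟩ := exists_nat_gt (M / r₀ ^ d)
  have hNpos : (0 : ℝ) < N := (by positivity : 0 < M / r₀ ^ d).trans hN
  have hMN : 0 ≤ M / N := by positivity
  refine ⟨N, by exact_mod_cast hNpos, (M / N) ^ (d⁻¹ : ℝ), by positivity, ?_, ?_⟩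
  · refine lt_of_pow_lt_pow_left₀ d hr₀.le ?_
    rw [Real.rpow_inv_natCast_pow hMN hd, div_lt_iff₀ hNpos]
    rwa [div_lt_iff₀ (by positivity), mul_comm] at hN
  · rw [Real.rpow_inv_natCast_pow hMN hd]
    field_simp

lemma pairwise_disjoint_ball_of_le_dist {X ι : Type*} [PseudoMetricSpace X] {c : ι → X} {r : ℝ}
    (hc : Pairwise fun i j => 2 * r ≤ dist (c i) (c j)) :
    Pairwise (Function.onFun Disjoint fun i => ball (c i) r) :=
  hc.mono fun _ _ h => ball_disjoint_ball (by linarith)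

section SeparatedBalls

variable {E ι : Type*} [NormedAddCommGroup E] [NormedSpace ℝ E] {c : ι → E} {r : ℝ}

lemma frontier_iUnion_ball [Finite ι] (hr : 0 < r)
    (hc : Pairwise fun i j => 2 * r ≤ dist (c i) (c j)) :
    frontier (⋃ i, ball (c i) r) = ⋃ i, sphere (c i) r := by
  rw [frontier, closure_iUnion_of_finite, (isOpen_iUnion fun i => isOpen_ball).interior_eq]
  simp_rw [closure_ball _ hr.ne']
  ext x
  simp only [mem_sdiff, mem_iUnion, mem_closedBall, mem_ball, mem_sphere, not_exists, not_lt]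
  constructor
  · rintro ⟨⟨i, hi⟩, h⟩
    exact ⟨i, le_antisymm hi (h i)⟩
  · rintro ⟨i, hi⟩
    refine ⟨⟨i, hi.le⟩, fun j => ?_⟩
    rcases eq_or_ne j i with rfl | hji
    · exact hi.ge
    · linarith [hc hji, dist_triangle_left (c j) (c i) x]

lemma ContDiffBump.eqOn_ite_of_pairwise_le_dist [HasContDiffBump E] [DecidableEq ι] {δ : ℝ}
    (hc : Pairwise fun i j => δ ≤ dist (c i) (c j)) {i₀ : ι} (f : ContDiffBump (c i₀))
    (hin : r ≤ f.rIn) (hout : f.rOut + r ≤ δ) (i : ι) :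
    EqOn f (fun _ => if i = i₀ then 1 else 0) (closedBall (c i) r) := by
  intro x hx
  split_ifs with h
  · subst h
    exact f.one_of_mem_closedBall (closedBall_subset_closedBall hin hx)
  · refine f.zero_of_le_dist ?_
    linarith [hc h, dist_triangle_left (c i) (c i₀) x, mem_closedBall.1 hx]

lemma fderiv_eq_zero_of_eqOn_const {u : E → ℝ} {U : ι → Set E} (hU : ∀ i, IsOpen (U i))
    (hu : ∀ i, ∃ a, EqOn u (fun _ => a) (U i)) : ∀ x ∈ ⋃ i, U i, fderiv ℝ u x = 0 := by
  intro x hx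
  obtain ⟨i, hi⟩ := mem_iUnion.1 hx
  obtain ⟨a, ha⟩ := hu i
  rw [(Filter.eventuallyEq_of_mem ((hU i).mem_nhds hi) ha).fderiv_eq, fderiv_const_apply]

variable [Nontrivial E]

lemma exists_pairwise_le_dist {δ : ℝ} (hδ : 0 ≤ δ) :
    ∃ c : ℕ → E, Pairwise fun i j => δ ≤ dist (c i) (c j) := by
  obtain ⟨v, hv⟩ := exists_norm_eq E hδ
  refine ⟨fun i => (i : ℝ) • v, fun i j hij => ?_⟩
  have : (1 : ℝ) ≤ |(i : ℝ) - j| := by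
    have h : (1 : ℤ) ≤ |(i : ℤ) - j| := Int.one_le_abs (sub_ne_zero.2 (by exact_mod_cast hij))
    exact_mod_cast h
  dsimp only
  rw [dist_eq_norm, ← sub_smul, norm_smul, Real.norm_eq_abs, hv]
  nlinarith

variable [MeasurableSpace E] [BorelSpace E] [FiniteDimensional ℝ E] (μ : Measure E)
  [μ.IsAddHaarMeasure]

lemma MeasureTheory.Measure.addHaar_iUnion_ball [Fintype ι] (hr : 0 ≤ r)
    (hc : Pairwise (Function.onFun Disjoint fun i => ball (c i) r)) :
    μ (⋃ i, ball (c i) r) =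
      Fintype.card ι * ENNReal.ofReal (r ^ Module.finrank ℝ E) * μ (ball 0 1) := by
  simp_rw [measure_iUnion hc (fun _ => measurableSet_ball), tsum_fintype,
    Measure.addHaar_ball μ _ hr, Finset.sum_const, nsmul_eq_mul, Finset.card_univ, mul_assoc]

lemma exists_separated_balls_measure_iUnion_eq {κ M r₀ : ℝ} (hκ : 2 ≤ κ) (hM : 0 < M)
    (hr₀ : 0 < r₀) :
    ∃ N : ℕ, 0 < N ∧ ∃ (c : Fin N → E) (r : ℝ), 0 < r ∧ r < r₀ ∧
      (Pairwise fun i j => κ * r ≤ dist (c i) (c j)) ∧ μ (⋃ i, ball (c i) r) = .ofReal M := by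
  have hω : 0 < μ.real (ball 0 1) :=
    ENNReal.toReal_pos (measure_ball_pos _ _ one_pos).ne' measure_ball_lt_top.ne
  obtain ⟨N, hN, r, hr, hrr₀, hNr⟩ :=
    exists_nat_mul_pow_eq_with_small_base (div_pos hM hω) hr₀
      (Module.finrank_pos (R := ℝ) (M := E)).ne'
  obtain ⟨c, hc⟩ := exists_pairwise_le_dist (E := E) (by positivity : 0 ≤ κ * r)
  have hc' : Pairwise fun i j : Fin N => κ * r ≤ dist (c i) (c j) :=
    fun i j h => hc (Fin.val_injective.ne h)
  refine ⟨N, hN, fun i => c i, r, hr, hrr₀, hc', ?_⟩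
  rw [Measure.addHaar_iUnion_ball μ hr.le
      (pairwise_disjoint_ball_of_le_dist (hc'.mono fun _ _ h => by nlinarith)),
    Fintype.card_fin, ← ofReal_measureReal measure_ball_lt_top.ne, ← ENNReal.ofReal_natCast,
    ← ENNReal.ofReal_mul (by positivity), ← ENNReal.ofReal_mul (by positivity), hNr,
    div_mul_cancel₀ _ hω.ne']

end SeparatedBalls

section StepFunction

variable {X ι : Type*} [MeasurableSpace X] {μ : Measure X} [Fintype ι] [DecidableEq ι]
  {s : ι → Set X} {g : X → ℝ} {i₀ : ι} {b : ℝ}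

lemma integrableOn_iUnion_of_eqOn_ite (hs : ∀ i, MeasurableSet (s i)) (hfin : μ (s i₀) ≠ ⊤)
    (hg : ∀ i, EqOn g (fun _ => if i = i₀ then b else 0) (s i)) :
    IntegrableOn g (⋃ i, s i) μ := by
  refine integrableOn_finite_iUnion.2 fun i => ?_
  refine IntegrableOn.congr_fun ?_ (hg i).symm (hs i)
  split_ifs with h
  · exact integrableOn_const (h ▸ hfin)
  · exact integrableOn_zero

lemma setIntegral_iUnion_of_eqOn_ite (hs : ∀ i, MeasurableSet (s i))
    (hd : Pairwise (Function.onFun Disjoint s)) (hfin : μ (s i₀) ≠ ⊤)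
    (hg : ∀ i, EqOn g (fun _ => if i = i₀ then b else 0) (s i)) :
    ∫ x in ⋃ i, s i, g x ∂μ = μ.real (s i₀) * b := by
  have hint i : IntegrableOn g (s i) μ :=
    (integrableOn_iUnion_of_eqOn_ite hs hfin hg).mono_set (subset_iUnion s i)
  rw [integral_iUnion_fintype hs hd hint]
  simp_rw [setIntegral_congr_fun (hs _) (hg _), setIntegral_const, smul_eq_mul, mul_ite, mul_zero]
  simp

end StepFunction

section Energy

variable {d : ℕ}

local notation "𝔼" => EuclideanSpace ℝ (Fin d)

noncomputable def energy (k m : ℝ) (Ω : Set 𝔼) (u : 𝔼 → ℝ) : ℝ :=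
  (∫ x in Ω, ‖fderiv ℝ u x‖ ^ 2) +
    (1/(k*m)) * (∫ x in frontier Ω, |u x| ∂(μH[(d : ℝ) - 1])) ^ 2

lemma sInf_le_energy {k m : ℝ} (hkm : 0 ≤ k * m) {Ω : Set 𝔼} {u : 𝔼 → ℝ} (hu : memH1 Ω u)
    (hu2 : ∫ x in Ω, u x ^ 2 = 1) :
    sInf {E : ℝ | ∃ u, memH1 Ω u ∧ (∫ x in Ω, (u x) ^ 2) = 1 ∧ E = energy k m Ω u} ≤
      energy k m Ω u := by
  refine csInf_le ⟨0, ?_⟩ ⟨u, hu, hu2, rfl⟩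
  rintro _ ⟨w, -, -, rfl⟩
  have : 0 ≤ ∫ x in Ω, ‖fderiv ℝ w x‖ ^ 2 := integral_nonneg fun x => sq_nonneg _
  unfold energy
  positivity

lemma exists_memH1_energy_eq {ι : Type*} [Fintype ι] (k m : ℝ) {c : ι → 𝔼} {r : ℝ} (hr : 0 < r)
    (hc : Pairwise fun i j => 3 * r ≤ dist (c i) (c j)) (i₀ : ι)
    (hS : μH[(d : ℝ) - 1] (sphere (c i₀) r) ≠ ⊤) :
    ∃ u, memH1 (⋃ i, ball (c i) r) u ∧ ∫ x in ⋃ i, ball (c i) r, u x ^ 2 = 1 ∧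
      energy k m (⋃ i, ball (c i) r) u =
        μH[(d : ℝ) - 1].real (sphere (c i₀) r) ^ 2 / (k * m * volume.real (ball (c i₀) r)) := by
  classical
  set V := volume.real (ball (c i₀) r)
  have hV : 0 < V := ENNReal.toReal_pos (measure_ball_pos _ _ hr).ne' measure_ball_lt_top.ne
  let f : ContDiffBump (c i₀) := ⟨r, 2 * r, hr, by linarith⟩
  set a := (√V)⁻¹
  have ha : a ^ 2 = V⁻¹ := by simp [a, hV.le]
  set u : 𝔼 → ℝ := fun x => a * f x
  have hu i : EqOn u (fun _ => if i = i₀ then a else 0) (closedBall (c i) r) := fun x hx => by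
    simp [u, f.eqOn_ite_of_pairwise_le_dist hc le_rfl (by simp [f]; linarith) i hx]
  have hc2 : Pairwise fun i j => 2 * r ≤ dist (c i) (c j) := hc.mono fun _ _ h => by linarith
  have hspheres : Pairwise (Function.onFun Disjoint fun i => sphere (c i) r) :=
    hc.mono fun _ _ h => (closedBall_disjoint_closedBall (by linarith)).mono
      sphere_subset_closedBall sphere_subset_closedBall
  have hΩ : MeasurableSet (⋃ i, ball (c i) r) := (isOpen_iUnion fun _ => isOpen_ball).measurableSet
  have hfr : frontier (⋃ i, ball (c i) r) = ⋃ i, sphere (c i) r := frontier_iUnion_ball hr hc2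
  have hfderiv : EqOn (fun x => ‖fderiv ℝ u x‖ ^ 2) (fun _ => 0) (⋃ i, ball (c i) r) :=
    fun x hx => by
      simp [fderiv_eq_zero_of_eqOn_const (fun _ => isOpen_ball)
        (fun i => ⟨_, (hu i).mono ball_subset_closedBall⟩) x hx]
  have hsq i : EqOn (fun x => u x ^ 2) (fun _ => if i = i₀ then a ^ 2 else 0) (ball (c i) r) :=
    fun x hx => by simp [hu i (ball_subset_closedBall hx)]
  have habs i : EqOn (fun x => |u x|) (fun _ => if i = i₀ then |a| else 0) (sphere (c i) r) :=
    fun x hx => by simp only [hu i (sphere_subset_closedBall hx)]; split_ifs <;> simp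
  refine ⟨u, ⟨(f.continuous.const_mul a).continuousOn, ?_, ?_, ?_, ?_⟩, ?_, ?_⟩
  · exact ((f.contDiff (n := 1)).differentiable one_ne_zero).const_mul a |>.differentiableOn
  · exact integrableOn_zero.congr_fun hfderiv.symm hΩ
  · exact integrableOn_iUnion_of_eqOn_ite (fun _ => measurableSet_ball) measure_ball_lt_top.ne hsq
  · exact hfr ▸ integrableOn_iUnion_of_eqOn_ite (fun _ => isClosed_sphere.measurableSet) hS habs
  · rw [setIntegral_iUnion_of_eqOn_ite (fun _ => measurableSet_ball)
      (pairwise_disjoint_ball_of_le_dist hc2) measure_ball_lt_top.ne hsq, ha,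
      mul_inv_cancel₀ hV.ne']
  · rw [energy, setIntegral_congr_fun hΩ hfderiv, integral_zero, hfr,
      setIntegral_iUnion_of_eqOn_ite (fun _ => isClosed_sphere.measurableSet) hspheres hS habs,
      abs_of_pos (by positivity : 0 < a), mul_pow, ha]
    field_simp
    ring

end Energy

/-- In dimension `d ≥ 3`, for every `ε > 0` there is a domain of prescribed volume `M`,
a disjoint union of finitely many balls, whose auxiliary eigenvalue is below `ε`. -/
theorem stmt17 {d : ℕ} (hd : 3 ≤ d) (M k m : ℝ) (hM : 0 < M) (hk : 0 < k) (hm : 0 < m) :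
    ∀ ε : ℝ, 0 < ε → ∃ Ω : Set (EuclideanSpace ℝ (Fin d)),
      IsOpen Ω ∧ Bornology.IsBounded Ω ∧ volume Ω = ENNReal.ofReal M ∧
      (∃ (N : ℕ) (c : Fin N → EuclideanSpace ℝ (Fin d)) (r : ℝ), 0 < r ∧
        Ω = ⋃ i, ball (c i) r ∧
        Pairwise (Function.onFun Disjoint fun i => ball (c i) r)) ∧
      sInf {E : ℝ | ∃ u, memH1 Ω u ∧ (∫ x in Ω, (u x) ^ 2) = 1 ∧
          E = (∫ x in Ω, ‖fderiv ℝ u x‖ ^ 2) +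
            (1/(k*m)) * (∫ x in frontier Ω, |u x| ∂(μH[(d : ℝ) - 1])) ^ 2} < ε := by
  intro ε hε
  have : NeZero d := ⟨by omega⟩
  set C := μH[(d : ℝ) - 1].real (sphere (0 : EuclideanSpace ℝ (Fin d)) 1) ^ 2 /
    volume.real (ball (0 : EuclideanSpace ℝ (Fin d)) 1) / (k * m)
  have hC : Filter.Tendsto (fun r : ℝ => r ^ (d - 2) * C) (𝓝 0) (𝓝 0) :=
    ((continuous_pow (d - 2)).mul continuous_const).tendsto' 0 0
      (by simp [zero_pow (by omega : d - 2 ≠ 0)])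
  obtain ⟨r₀, hr₀, hsmall⟩ := Metric.tendsto_nhds_nhds.1 hC ε hε
  obtain ⟨N, hN, c, r, hr, hrr₀, hc, hvol⟩ :=
    exists_separated_balls_measure_iUnion_eq (E := EuclideanSpace ℝ (Fin d)) volume
      (by norm_num : (2 : ℝ) ≤ 3) hM hr₀
  obtain ⟨u, hu, hu2, hEu⟩ := exists_memH1_energy_eq k m hr hc ⟨0, hN⟩
    (EuclideanSpace.hausdorffMeasure_sphere_ne_top (by omega) _ hr)
  refine ⟨⋃ i, ball (c i) r, isOpen_iUnion fun _ => isOpen_ball,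
    Bornology.isBounded_iUnion.2 fun _ => isBounded_ball, hvol,
    ⟨N, c, r, hr, rfl, pairwise_disjoint_ball_of_le_dist (hc.mono fun _ _ h => by linarith)⟩, ?_⟩
  calc _ ≤ energy k m (⋃ i, ball (c i) r) u := sInf_le_energy (by positivity) hu hu2
    _ = r ^ (d - 2) * C := by
      rw [hEu, div_mul_eq_div_div_swap, hausdorffMeasure_sphere_sq_div_volume_ball (by omega) _ hr,
        mul_div_assoc]
    _ ≤ dist (r ^ (d - 2) * C) 0 := (le_abs_self _).trans_eq (Real.dist_0_eq_abs _).symm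
    _ < ε := hsmall (by rwa [Real.dist_0_eq_abs, abs_of_pos hr])
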